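/- If f ∈ BMO(𝕋) and sup_{n∈ℤ} ‖e_n f‖_{BMO(𝕋)} ≤ C < ∞, where e_n(x) = e^{2πinx}, then f ∈ L^∞(𝕋) with ‖f‖_∞ ≤ 2C. -/

import Mathlib

/-!
Fix an interval `I` of length `< 1`. For every `n`, the triangle inequality gives
`⨍_I |f| = ⨍_I |e_n f| ≤ ⨍_I |e_n f - (e_n f)_I| + |(e_n f)_I| ≤ C + |(e_n f)_I|`, and
`(e_n f)_I → 0` as `|n| → ∞` by the Riemann–Lebesgue lemma applied to `f 1_I`. Hence every
average of `|f|` over a short interval is at most `C`, and the Lebesgue differentiation theorem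
gives `|f| ≤ C ≤ 2C` almost everywhere.
-/

open Real MeasureTheory Filter Topology Set
open scoped Interval

theorem norm_exp_two_pi_I_mul_intCast_mul (n : ℤ) (t : ℝ) :
    ‖Complex.exp (2 * π * Complex.I * n * t)‖ = 1 := by
  rw [Complex.norm_exp]
  simp

theorem ae_le_of_intervalAverage_le {g : ℝ → ℝ} (hg : LocallyIntegrable g volume) {δ C : ℝ}
    (hδ : 0 < δ) (h : ∀ a b, a < b → b - a < δ → ⨍ x in a..b, g x ≤ C) :
    ∀ᵐ x, g x ≤ C := by
  filter_upwards [(IsUnifLocDoublingMeasure.vitaliFamily volume 1).ae_tendsto_average hg]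
    with x hx
  refine le_of_tendsto (hx.comp (Real.tendsto_Icc_vitaliFamily_right x)) ?_
  filter_upwards [Ioo_mem_nhdsGT (lt_add_of_pos_right x hδ)] with y ⟨hxy, hyδ⟩
  have hIcc : ⨍ t in Icc x y, g t = ⨍ t in x..y, g t := by
    rw [uIoc_of_le hxy.le, Measure.restrict_congr_set Ioc_ae_eq_Icc]
  simpa [hIcc] using h x y hxy (by linarith)

theorem intervalAverage_norm_le_intervalAverage_norm_sub_add {E : Type*} [NormedAddCommGroup E]
    [NormedSpace ℝ E] {g : ℝ → E} {a b : ℝ} (hab : a < b) (hg : IntervalIntegrable g volume a b)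
    (c : E) : ⨍ x in a..b, ‖g x‖ ≤ (⨍ x in a..b, ‖g x - c‖) + ‖c‖ := by
  have hsub : IntervalIntegrable (fun x => ‖g x - c‖) volume a b :=
    (hg.sub intervalIntegrable_const).norm
  have hmono : ∫ x in a..b, ‖g x‖ ≤ ∫ x in a..b, (‖g x - c‖ + ‖c‖) :=
    intervalIntegral.integral_mono_on hab.le hg.norm (hsub.add intervalIntegrable_const)
      fun x _ => norm_le_norm_sub_add (g x) c
  rw [intervalIntegral.integral_add hsub intervalIntegrable_const,
    intervalIntegral.integral_const, smul_eq_mul] at hmono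
  simp only [interval_average_eq, smul_eq_mul]
  calc (b - a)⁻¹ * ∫ x in a..b, ‖g x‖
      ≤ (b - a)⁻¹ * ((∫ x in a..b, ‖g x - c‖) + (b - a) * ‖c‖) := by gcongr
    _ = _ := by field_simp [(sub_pos.2 hab).ne']

theorem tendsto_intervalIntegral_mul_exp_cofinite (f : ℝ → ℂ) (a b : ℝ) :
    Tendsto (fun n : ℤ => ∫ y in a..b, f y * Complex.exp (2 * π * Complex.I * n * y))
      cofinite (𝓝 0) := by
  have hfreq : Tendsto (fun n : ℤ => ((-n : ℤ) : ℝ)) cofinite (cocompact ℝ) :=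
    Int.tendsto_coe_cofinite.comp neg_injective.tendsto_cofinite
  have hRL : Tendsto (fun n : ℤ => ∫ y in Ι a b, f y * Complex.exp (2 * π * Complex.I * n * y))
      cofinite (𝓝 0) := by
    refine ((Real.tendsto_integral_exp_smul_cocompact ((Ι a b).indicator f)).comp hfreq).congr
      fun n => ?_
    rw [Function.comp_apply, ← integral_indicator measurableSet_uIoc]
    congr 1 with y
    by_cases hy : y ∈ Ι a b
    · simp only [indicator_of_mem hy]
      rw [Circle.smul_def, Real.fourierChar_apply, smul_eq_mul, mul_comm]
      push_cast
      ring_nf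
    · simp [indicator_of_notMem hy]
  simpa [intervalIntegral.intervalIntegral_eq_integral_uIoc] using
    hRL.const_smul (if a ≤ b then 1 else -1 : ℝ)

theorem intervalAverage_norm_le_of_modulated_oscillation_le {f : ℝ → ℂ} {a b C : ℝ} (hab : a < b)
    (hf : IntervalIntegrable f volume a b)
    (hosc : ∀ n : ℤ, (b - a)⁻¹ * ∫ x in a..b,
      ‖f x * Complex.exp (2 * π * Complex.I * n * x) -
        (b - a)⁻¹ • ∫ y in a..b, f y * Complex.exp (2 * π * Complex.I * n * y)‖ ≤ C) :
    ⨍ x in a..b, ‖f x‖ ≤ C := by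
  set c : ℤ → ℂ := fun n => (b - a)⁻¹ • ∫ y in a..b, f y * Complex.exp (2 * π * Complex.I * n * y)
  have hbound : ∀ n, ⨍ x in a..b, ‖f x‖ ≤ C + ‖c n‖ := fun n => by
    have hmod : IntervalIntegrable (fun x => f x * Complex.exp (2 * π * Complex.I * n * x))
        volume a b :=
      hf.mul_continuousOn (by fun_prop)
    have := intervalAverage_norm_le_intervalAverage_norm_sub_add hab hmod (c n)
    simp only [norm_mul, norm_exp_two_pi_I_mul_intCast_mul, mul_one] at this
    simp only [interval_average_eq, smul_eq_mul] at this ⊢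
    linarith [hosc n]
  have hc : Tendsto (fun n => C + ‖c n‖) cofinite (𝓝 C) := by
    simpa only [smul_zero, norm_zero, add_zero] using
      ((tendsto_intervalIntegral_mul_exp_cofinite f a b).const_smul (b - a)⁻¹).norm.const_add C
  exact ge_of_tendsto' hc hbound

theorem bmo_modulation_bounded_implies_Linfty_general
    (f : ℝ → ℂ)
    (hloc : LocallyIntegrable f volume) (C : ℝ)
    (hbmo : ∀ (n : ℤ) (a b : ℝ), a < b → b - a < 1 →
      (b - a)⁻¹ * ∫ x in a..b,
          ‖f x * Complex.exp (2 * π * Complex.I * n * x) -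
            (b - a)⁻¹ • ∫ y in a..b, f y * Complex.exp (2 * π * Complex.I * n * y)‖ ≤ C) :
    ∀ᵐ x : ℝ, ‖f x‖ ≤ 2 * C := by
  have hloc_norm : LocallyIntegrable (fun x => ‖f x‖) volume :=
    locallyIntegrableOn_univ.mp (hloc.locallyIntegrableOn univ).norm
  have hle : ∀ᵐ x : ℝ, ‖f x‖ ≤ C :=
    ae_le_of_intervalAverage_le hloc_norm one_pos fun a b hab hba =>
      intervalAverage_norm_le_of_modulated_oscillation_le hab
        ((hloc.integrableOn_isCompact isCompact_uIcc).intervalIntegrable)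
        fun n => hbmo n a b hab hba
  filter_upwards [hle] with x hx
  linarith [norm_nonneg (f x)]

/-- If `f` is a 1-periodic locally integrable function and the functions `e_n f`,
`e_n(x) = e^{2πinx}`, have BMO norms bounded by `C` uniformly in `n ∈ ℤ`, then
`f ∈ L^∞` with `‖f‖_∞ ≤ 2C`. -/
theorem bmo_modulation_bounded_implies_Linfty
    (f : ℝ → ℂ) (hper : ∀ x, f (x + 1) = f x)
    (hloc : LocallyIntegrable f volume) (C : ℝ)
    (hbmo : ∀ (n : ℤ) (a b : ℝ), a < b → b - a < 1 →
      (b - a)⁻¹ * ∫ x in a..b,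
          ‖f x * Complex.exp (2 * π * Complex.I * n * x) -
            (b - a)⁻¹ • ∫ y in a..b, f y * Complex.exp (2 * π * Complex.I * n * y)‖ ≤ C) :
    ∀ᵐ x : ℝ, ‖f x‖ ≤ 2 * C :=
  bmo_modulation_bounded_implies_Linfty_general f hloc C hbmo
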